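/- arXiv:1808.03741 — 8 statements merged into one kernel-verified Lean document; each statement's English description precedes it below -/
import Mathlib

section
/- The 4×4 matrix J = [[0,0,-p x₁, -p β x₁],[0, f₂ − p r₂, 0, 0],[0, 0, b/α − b, 0],[c, c, −b/α, −b]] (with x₁ = b f₁/(c β), r₂ = f₁/β) has eigenvalue b/α − b > 0, so the symmetric two-node network's fixed point with local immunodeficiency is linearly unstable. -/
open Matrix

/-! The third row of `J` is `b / α - b` times the third unit row, so the corresponding row of `J - (b / α - b) • 1`
vanishes; that matrix is therefore singular and its kernel provides the eigenvector. -/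

theorem Matrix.exists_mulVec_eq_smul_of_row_eq_single {n R : Type*} [Fintype n] [DecidableEq n]
    [CommRing R] [IsDomain R] (A : Matrix n n R) (i : n) (μ : R) (hrow : A i = Pi.single i μ) :
    ∃ v ≠ 0, A *ᵥ v = μ • v := by
  have hsingular : (A - μ • (1 : Matrix n n R)).det = 0 :=
    det_eq_zero_of_row_eq_zero i fun j => by
      by_cases hj : i = j
      · subst hj; simp [hrow]
      · simp [hrow, hj, Ne.symm hj]
  obtain ⟨v, hv, hker⟩ := exists_mulVec_eq_zero_iff.mpr hsingular
  refine ⟨v, hv, ?_⟩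
  rwa [sub_mulVec, smul_mulVec, one_mulVec, sub_eq_zero] at hker

theorem stmt_2_general (b c p α β f₁ f₂ : ℝ)
    (hb : 0 < b)
    (hβ : 0 < β) (hβα : β < α) (hα1 : α < 1) :
    let x₁ : ℝ := b * f₁ / (c * β)
    let r₂ : ℝ := f₁ / β
    let J : Matrix (Fin 4) (Fin 4) ℝ :=
      !![0, 0, -p * x₁, -p * β * x₁;
         0, f₂ - p * r₂, 0, 0;
         0, 0, b / α - b, 0;
         c, c, -b / α, -b]
    (∃ v : Fin 4 → ℝ, v ≠ 0 ∧ J.mulVec v = (b / α - b) • v) ∧ 0 < b / α - b := by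
  intro x₁ r₂ J
  have hα : 0 < α := hβ.trans hβα
  refine ⟨J.exists_mulVec_eq_smul_of_row_eq_single 2 _ ?_, ?_⟩
  · ext j
    fin_cases j <;> simp [J]
  · exact sub_pos.mpr ((lt_div_iff₀ hα).mpr (mul_lt_of_lt_one_right hb hα1))

theorem stmt_2 (b c p α β f₁ f₂ : ℝ)
    (hb : 0 < b) (hc : 0 < c) (hp : 0 < p)
    (hβ : 0 < β) (hβα : β < α) (hα1 : α < 1)
    (hf₁ : 0 < f₁) :
    let x₁ : ℝ := b * f₁ / (c * β)
    let r₂ : ℝ := f₁ / β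
    let J : Matrix (Fin 4) (Fin 4) ℝ :=
      !![0, 0, -p * x₁, -p * β * x₁;
         0, f₂ - p * r₂, 0, 0;
         0, 0, b / α - b, 0;
         c, c, -b / α, -b]
    (∃ v : Fin 4 → ℝ, v ≠ 0 ∧ J.mulVec v = (b / α - b) • v) ∧ 0 < b / α - b :=
  stmt_2_general b c p α β f₁ f₂ hb hβ hβα hα1
end

section
/- With f₁ = 1, f₂ = 3, f₃ = 4, b = 1, α = 2/3, β = 4/9, one has λ₁ := f₂ − f₁/β − β(f₃ − f₁) = −7/12 < 0 and λ₂ := b/α − 2b = −1/2 < 0, and all four roots of P(λ) = λ⁴ + b(1 + (1−α)(f₃−f₁)/D) λ³ + (b f₃ + b²(1−α)(f₃−f₁)/D) λ² + b²(1−α)(f₃−f₁)(1 + f₁/D) λ + b²(1−α) f₁(f₃−f₁), where D = f₃ − f₁ + (α/β) f₁, have strictly negative real part. -/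
theorem stmt_7 :
    let f₁ : ℝ := 1; let f₂ : ℝ := 3; let f₃ : ℝ := 4
    let b : ℝ := 1; let α : ℝ := 2/3; let β : ℝ := 4/9
    let D : ℝ := f₃ - f₁ + (α / β) * f₁
    (f₂ - f₁ / β - β * (f₃ - f₁) = -7/12) ∧ (f₂ - f₁ / β - β * (f₃ - f₁) < 0) ∧
    (b / α - 2 * b = -1/2) ∧ (b / α - 2 * b < 0) ∧
    ∀ z : ℂ, z ^ 4 + (b * (1 + (1 - α) * (f₃ - f₁) / D) : ℝ) * z ^ 3 +
        ((b * f₃ + b ^ 2 * (1 - α) * (f₃ - f₁) / D : ℝ) : ℂ) * z ^ 2 +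
        ((b ^ 2 * (1 - α) * (f₃ - f₁) * (1 + f₁ / D) : ℝ) : ℂ) * z +
        ((b ^ 2 * (1 - α) * f₁ * (f₃ - f₁) : ℝ) : ℂ) = 0 → z.re < 0 := by
  refine ⟨by norm_num, by norm_num, by norm_num, by norm_num, ?_⟩
  intro z h
  have h' : z ^ 4 + (11/9 : ℂ) * z ^ 3 + (38/9 : ℂ) * z ^ 2 + (11/9 : ℂ) * z + 1 = 0 := by
    rw [← h]; norm_num
  set x := z.re with hx
  set y := z.im with hy
  rw [Complex.ext_iff] at h'
  obtain ⟨hre, him⟩ := h'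
  simp only [pow_succ, pow_zero, one_mul, Complex.add_re, Complex.add_im, Complex.mul_re,
    Complex.mul_im, Complex.one_re, Complex.one_im, Complex.zero_re, Complex.zero_im,
    Complex.div_re, Complex.div_im, ← hx, ← hy] at hre him
  norm_num at hre him
  by_contra hc
  push_neg at hc
  rcases eq_or_ne y 0 with h0 | h0
  · rw [h0] at hre
    nlinarith [pow_nonneg hc 2, pow_nonneg hc 3, pow_nonneg hc 4, hre]
  · have h2 : y * (4*x^3 - 4*x*y^2 + 11/9*(3*x^2 - y^2) + 76/9*x + 11/9) = 0 := by
      linear_combination him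
    have hu : y^2*(4*x+11/9) = 4*x^3 + 11/3*x^2 + 76/9*x + 11/9 := by
      rcases mul_eq_zero.mp h2 with h3 | h3
      · exact absurd h3 h0
      · nlinarith [h3]
    have hR : (64:ℝ)*x^6 + 352/3*x^5 + 5584/27*x^4 + 131032/729*x^3 + 81460/729*x^2
        + 27302/729*x + 2420/729 = 0 := by
      linear_combination (-(4*x+11/9)^2) * hre
        + (y^2*(4*x+11/9) + (4*x^3+11/3*x^2+76/9*x+11/9)
           + (-6*x^2 - 11/3*x - 38/9)*(4*x+11/9)) * hu
    nlinarith [pow_nonneg hc 2, pow_nonneg hc 3, pow_nonneg hc 4, pow_nonneg hc 5,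
      pow_nonneg hc 6, hR]
end

section
/- For real parameters b, c, p > 0, 0 < β < α < 1, f₁, f₂, f₃ > 0 satisfying f₃ > f₁, the point x₁ = (b f₁/(c p β))(1−α), x₂ = 0, x₃ = (b/(cp))(f₃ − f₁ + (α/β) f₁), r₁ = 0, r₂ = f₁/(p β), r₃ = (f₃ − f₁)/p is an equilibrium of the branch-cycle three-node system: ẋ₁ = f₁x₁ − p x₁(r₁ + β r₂), ẋ₂ = f₂x₂ − p x₂(r₂ + β r₃), ẋ₃ = f₃x₃ − p x₃(β r₂ + r₃), ṙ₁ = c x₁ r₁/(r₁+α r₂) − b r₁, ṙ₂ = c(x₁ α r₂/(r₁+α r₂) + x₂ r₂/(r₂+α r₃) + x₃ α r₂/(α r₂+r₃)) − b r₂, ṙ₃ = c(x₂ α r₃/(r₂+α r₃) + x₃ r₃/(α r₂+r₃)) − b r₃. Moreover all population values x₁, x₃, r₂, r₃ at this point are strictly positive. -/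
/-! At this point `c x₁ = b (1 - α) r₂` and `c x₃ = b (α r₂ + r₃)`. Since `r₁ = 0`, node 1 feeds all
of its production to resource 2, while node 3 splits its production between resources 2 and 3 in the
ratio `α r₂ : r₃`; so resource 2 receives `b (1 - α) r₂ + b α r₂ = b r₂` and resource 3 receives `b r₃`,
which balances their decay. The consumer equations reduce to `p β r₂ = f₁` and `p (β r₂ + r₃) = f₃`. -/

lemma mul_mul_div_of_mul_eq {b c x s : ℝ} (r : ℝ) (hs : s ≠ 0) (hx : c * x = b * s) :
    c * (x * r / s) = b * r := by
  rw [← mul_div_assoc, ← mul_assoc, hx]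
  field_simp

theorem stmt_8_general (b c p α β f₁ f₂ f₃ : ℝ)
    (hb : 0 < b) (hc : 0 < c) (hp : 0 < p)
    (hβ : 0 < β) (hβα : β < α) (hα1 : α < 1)
    (hf₁ : 0 < f₁) (h31 : f₁ < f₃) :
    let x₁ : ℝ := b * f₁ / (c * p * β) * (1 - α)
    let x₂ : ℝ := 0
    let x₃ : ℝ := b / (c * p) * (f₃ - f₁ + (α / β) * f₁)
    let r₁ : ℝ := 0
    let r₂ : ℝ := f₁ / (p * β)
    let r₃ : ℝ := (f₃ - f₁) / p
    (f₁ * x₁ - p * x₁ * (r₁ + β * r₂) = 0) ∧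
    (f₂ * x₂ - p * x₂ * (r₂ + β * r₃) = 0) ∧
    (f₃ * x₃ - p * x₃ * (β * r₂ + r₃) = 0) ∧
    (c * x₁ * r₁ / (r₁ + α * r₂) - b * r₁ = 0) ∧
    (c * (x₁ * (α * r₂) / (r₁ + α * r₂) + x₂ * r₂ / (r₂ + α * r₃) +
        x₃ * (α * r₂) / (α * r₂ + r₃)) - b * r₂ = 0) ∧
    (c * (x₂ * (α * r₃) / (r₂ + α * r₃) + x₃ * r₃ / (α * r₂ + r₃)) - b * r₃ = 0) ∧
    0 < x₁ ∧ 0 < x₃ ∧ 0 < r₂ ∧ 0 < r₃ := by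
  intro x₁ x₂ x₃ r₁ r₂ r₃
  have hα : 0 < α := hβ.trans hβα
  have hr₂ : 0 < r₂ := by positivity
  have hr₃ : 0 < r₃ := div_pos (sub_pos.2 h31) hp
  have hpr₂ : p * (β * r₂) = f₁ := by simp only [r₂]; field_simp
  have hpr₃ : p * r₃ = f₃ - f₁ := by simp only [r₃]; field_simp
  have hcx₁ : c * x₁ = b * (1 - α) * r₂ := by simp only [x₁, r₂]; field_simp
  have hcx₃ : c * x₃ = b * (α * r₂ + r₃) := by simp only [x₃, r₂, r₃]; field_simp; ring
  have hshare₁ : x₁ * (α * r₂) / (r₁ + α * r₂) = x₁ := by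
    rw [zero_add, mul_div_cancel_right₀ _ (by positivity)]
  have hshare₃ := mul_mul_div_of_mul_eq (α * r₂) (by positivity) hcx₃
  refine ⟨by linear_combination (-x₁) * hpr₂, by simp [x₂],
    by linear_combination (-x₃) * (hpr₂ + hpr₃), by simp [r₁],
    by linear_combination c * hshare₁ + hshare₃ + hcx₁, ?_, ?_, ?_, hr₂, hr₃⟩
  · simpa [x₂, sub_eq_zero] using mul_mul_div_of_mul_eq r₃ (by positivity) hcx₃
  · have : 0 < 1 - α := sub_pos.2 hα1
    positivity
  · have : 0 < f₃ - f₁ + α / β * f₁ := add_pos (sub_pos.2 h31) (by positivity)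
    positivity

theorem stmt_8 (b c p α β f₁ f₂ f₃ : ℝ)
    (hb : 0 < b) (hc : 0 < c) (hp : 0 < p)
    (hβ : 0 < β) (hβα : β < α) (hα1 : α < 1)
    (hf₁ : 0 < f₁) (hf₂ : 0 < f₂) (hf₃ : 0 < f₃) (h31 : f₁ < f₃) :
    let x₁ : ℝ := b * f₁ / (c * p * β) * (1 - α)
    let x₂ : ℝ := 0
    let x₃ : ℝ := b / (c * p) * (f₃ - f₁ + (α / β) * f₁)
    let r₁ : ℝ := 0
    let r₂ : ℝ := f₁ / (p * β)
    let r₃ : ℝ := (f₃ - f₁) / p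
    (f₁ * x₁ - p * x₁ * (r₁ + β * r₂) = 0) ∧
    (f₂ * x₂ - p * x₂ * (r₂ + β * r₃) = 0) ∧
    (f₃ * x₃ - p * x₃ * (β * r₂ + r₃) = 0) ∧
    (c * x₁ * r₁ / (r₁ + α * r₂) - b * r₁ = 0) ∧
    (c * (x₁ * (α * r₂) / (r₁ + α * r₂) + x₂ * r₂ / (r₂ + α * r₃) +
        x₃ * (α * r₂) / (α * r₂ + r₃)) - b * r₂ = 0) ∧
    (c * (x₂ * (α * r₃) / (r₂ + α * r₃) + x₃ * r₃ / (α * r₂ + r₃)) - b * r₃ = 0) ∧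
    0 < x₁ ∧ 0 < x₃ ∧ 0 < r₂ ∧ 0 < r₃ :=
  stmt_8_general b c p α β f₁ f₂ f₃ hb hc hp hβ hβα hα1 hf₁ h31
end

section
/- The 6×6 Jacobian of the three-node branch-cycle network at the fixed point x₁ = b f₁/(c p β), x₂ = x₃ = 0, r₂ = f₁/(p β), r₁ = r₃ = 0, namely the matrix with rows [0,0,0,−b f₁/(cβ),−b f₁/c,0], [0,f₂−f₁/β,0,0,0,0], [0,0,f₃−f₁,0,0,0], [0,0,0,b/α−b,0,0], [c,c,c,−b/α,−b,0], [0,0,0,0,0,−b], has b/α − b as an eigenvalue; hence for 0 < α < 1 this fixed point is linearly unstable. -/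
open Matrix

private lemma consv5 (x : ℝ) (u : Fin 5 → ℝ) : vecCons x u 5 = u 4 := rfl
private lemma consv4 (x : ℝ) (u : Fin 4 → ℝ) : vecCons x u 4 = u 3 := rfl
private lemma consv3 (x : ℝ) (u : Fin 3 → ℝ) : vecCons x u 3 = u 2 := rfl
private lemma consv2 (x : ℝ) (u : Fin 2 → ℝ) : vecCons x u 2 = u 1 := rfl
private lemma consv1 (x : ℝ) (u : Fin 1 → ℝ) : vecCons x u 1 = u 0 := rfl

theorem stmt_9 (b c α β f₁ f₂ f₃ : ℝ)
    (hb : 0 < b) (hc : 0 < c)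
    (hβ : 0 < β) (hβα : β < α) (hα1 : α < 1)
    (hf₁ : 0 < f₁) (hf₂ : 0 < f₂) (hf₃ : 0 < f₃) :
    let J : Matrix (Fin 6) (Fin 6) ℝ :=
      !![0, 0, 0, -b * f₁ / (c * β), -b * f₁ / c, 0;
         0, f₂ - f₁ / β, 0, 0, 0, 0;
         0, 0, f₃ - f₁, 0, 0, 0;
         0, 0, 0, b / α - b, 0, 0;
         c, c, c, -b / α, -b, 0;
         0, 0, 0, 0, 0, -b]
    (∃ v : Fin 6 → ℝ, v ≠ 0 ∧ J.mulVec v = (b / α - b) • v) ∧ 0 < b / α - b := by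
  intro J
  have hα : 0 < α := hβ.trans hβα
  have hlam : 0 < b / α - b := by
    have : b < b / α := by
      rw [lt_div_iff₀ hα]
      nlinarith
    linarith
  refine ⟨?_, hlam⟩
  refine ⟨![b * α * f₁ * (β - 1), 0, 0, c * β * (f₁ * α ^ 2 + b * (1 - α)),
      -(c * (f₁ * α ^ 2 + b * β * (1 - α))), 0], ?_, ?_⟩
  · intro h
    have h3 := congrFun h 3
    have hpos : 0 < c * β * (f₁ * α ^ 2 + b * (1 - α)) := by
      have h1 : 0 < f₁ * α ^ 2 + b * (1 - α) := by nlinarith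
      positivity
    have h3' : c * β * (f₁ * α ^ 2 + b * (1 - α)) = 0 := h3
    exact absurd h3' (ne_of_gt hpos)
  · funext i
    have hα' : α ≠ 0 := ne_of_gt hα
    have hβ' : β ≠ 0 := ne_of_gt hβ
    have hc' : c ≠ 0 := ne_of_gt hc
    fin_cases i <;>
      simp [J, Matrix.mulVec, dotProduct, Fin.sum_univ_six,
        consv5, consv4, consv3, consv2, consv1] <;>
      field_simp <;> ring
end

section
/- The 6×6 matrix with rows [0,0,0,−(b/c)f₁,−(b/c)β f₁,0], [0,0,0,0,−(b/(cβ))f₂,−(b/c)f₂], [0,0,f₃−f₂/β,0,0,0], [c,0,0,−b,−αb,0], [0,0,0,0,αb+b/α−b,0], [0,c,c,0,−b/α,−b] has eigenvalue αb + b/α − b, which is strictly positive whenever b > 0 and α > 0 (since α + 1/α ≥ 2 > 1); hence this fixed point of the branch-cycle network is unstable. -/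
open Matrix

@[simp]
lemma cons_val_five' {α : Type*} {m : ℕ} (x : α) (u : Fin m.succ.succ.succ.succ.succ → α) :
    Matrix.vecCons x u 5 = Matrix.vecHead (Matrix.vecTail (Matrix.vecTail (Matrix.vecTail (Matrix.vecTail u)))) :=
  rfl

set_option maxHeartbeats 2000000 in
theorem stmt_10 (b c p α β f₁ f₂ f₃ : ℝ)
    (hb : 0 < b) (hc : 0 < c) (hp : 0 < p)
    (hβ : 0 < β) (hβα : β < α) (hα1 : α < 1)
    (hf₁ : 0 < f₁) (hf₂ : 0 < f₂) (hf₃ : 0 < f₃) :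
    let J : Matrix (Fin 6) (Fin 6) ℝ :=
      !![0, 0, 0, -(b / c) * f₁, -(b / c) * β * f₁, 0;
         0, 0, 0, 0, -(b / (c * β)) * f₂, -(b / c) * f₂;
         0, 0, f₃ - f₂ / β, 0, 0, 0;
         c, 0, 0, -b, -α * b, 0;
         0, 0, 0, 0, α * b + b / α - b, 0;
         0, c, c, 0, -b / α, -b]
    (∃ v : Fin 6 → ℝ, v ≠ 0 ∧ J.mulVec v = (α * b + b / α - b) • v) ∧
      0 < α * b + b / α - b := by
  intro J
  have hα : 0 < α := lt_trans hβ hβα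
  have hα0 : α ≠ 0 := ne_of_gt hα
  have hb0 : b ≠ 0 := ne_of_gt hb
  have hc0 : c ≠ 0 := ne_of_gt hc
  have hβ0 : β ≠ 0 := ne_of_gt hβ
  have hP : b*(α^2+1)*(α^2+1-α) + f₁*α^2 ≠ 0 := by
    have h1 : 0 < α^2+1-α := by nlinarith [sq_nonneg (α-1)]
    positivity
  have hQ : b*(α^2+1)*(α^2+1-α) + f₂*α^2 ≠ 0 := by
    have h1 : 0 < α^2+1-α := by nlinarith [sq_nonneg (α-1)]
    positivity
  have hA : (α^2+1 : ℝ) ≠ 0 := by positivity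
  constructor
  · obtain ⟨u0, hu0⟩ : ∃ x : ℝ,
        x = b*f₁*α*(α^2 - β*(α^2+1))/(c*(b*(α^2+1)*(α^2+1-α) + f₁*α^2)) := ⟨_, rfl⟩
    obtain ⟨u1, hu1⟩ : ∃ x : ℝ,
        x = b*f₂*α*(β - α^2 - 1)/(β*c*(b*(α^2+1)*(α^2+1-α) + f₂*α^2)) := ⟨_, rfl⟩
    obtain ⟨u3, hu3⟩ : ∃ x : ℝ, x = α*(c*u0 - α*b)/(b*(α^2+1)) := ⟨_, rfl⟩
    obtain ⟨u5, hu5⟩ : ∃ x : ℝ, x = (α*c*u1 - b)/(b*(α^2+1)) := ⟨_, rfl⟩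
    refine ⟨![u0, u1, 0, u3, 1, u5], ?_, ?_⟩
    · intro h
      have := congrFun h 4
      simp at this
    · funext i
      fin_cases i <;>
        simp [J, Matrix.mulVec, dotProduct, Fin.sum_univ_six]
      · subst hu3; subst hu0; field_simp; ring
      · subst hu5; subst hu1; field_simp; ring
      · subst hu3; field_simp; ring
      · subst hu5; subst hu1; field_simp; ring
  · have hba : b < b / α := by
      rw [lt_div_iff₀ hα]; nlinarith
    nlinarith
end

section
/- Let b, c, p > 0, 0 < β < α < 1/2, f₁, f₂, f₃, f₄ > 0 with f₂ < f₃, f₂ < f₄. Then the point x₁ = 0, r₁ = f₂/(pβ), x₂ = b f₂(1−2α)/(cpβ), r₂ = 0, x₃ = (b/(cp))((α/β)f₂+f₃−f₂), r₃ = (f₃−f₂)/p, x₄ = (b/(cp))((α/β)f₂+f₄−f₂), r₄ = (f₄−f₂)/p is an equilibrium of the T-shaped system: ẋ₁ = f₁x₁ − p x₁ r₁, ẋᵢ = fᵢxᵢ − p xᵢ(β r₁ + rᵢ) for i = 2,3,4, ṙ₁ = c(x₁ + Σ_{i=2}^{4} xᵢ α r₁/(α r₁ + rᵢ)) − b r₁,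 and ṙᵢ = c xᵢ rᵢ/(α r₁ + rᵢ) − b rᵢ for i = 2,3,4. -/
set_option maxHeartbeats 1000000

theorem stmt_13 (b c p α β f₁ f₂ f₃ f₄ : ℝ)
    (hb : 0 < b) (hc : 0 < c) (hp : 0 < p)
    (hβ : 0 < β) (hβα : β < α) (hα : α < 1/2)
    (hf₁ : 0 < f₁) (hf₂ : 0 < f₂) (hf₃ : 0 < f₃) (hf₄ : 0 < f₄)
    (h23 : f₂ < f₃) (h24 : f₂ < f₄) :
    let x₁ : ℝ := 0
    let r₁ : ℝ := f₂ / (p * β)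
    let x₂ : ℝ := b * f₂ * (1 - 2 * α) / (c * p * β)
    let r₂ : ℝ := 0
    let x₃ : ℝ := b / (c * p) * ((α / β) * f₂ + f₃ - f₂)
    let r₃ : ℝ := (f₃ - f₂) / p
    let x₄ : ℝ := b / (c * p) * ((α / β) * f₂ + f₄ - f₂)
    let r₄ : ℝ := (f₄ - f₂) / p
    (f₁ * x₁ - p * x₁ * r₁ = 0) ∧
    (f₂ * x₂ - p * x₂ * (β * r₁ + r₂) = 0) ∧
    (f₃ * x₃ - p * x₃ * (β * r₁ + r₃) = 0) ∧
    (f₄ * x₄ - p * x₄ * (β * r₁ + r₄) = 0) ∧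
    (c * (x₁ + x₂ * (α * r₁) / (α * r₁ + r₂) + x₃ * (α * r₁) / (α * r₁ + r₃) +
        x₄ * (α * r₁) / (α * r₁ + r₄)) - b * r₁ = 0) ∧
    (c * x₂ * r₂ / (α * r₁ + r₂) - b * r₂ = 0) ∧
    (c * x₃ * r₃ / (α * r₁ + r₃) - b * r₃ = 0) ∧
    (c * x₄ * r₄ / (α * r₁ + r₄) - b * r₄ = 0) := by
  intro x₁ r₁ x₂ r₂ x₃ r₃ x₄ r₄
  have hα0 : 0 < α := hβ.trans hβα
  have hpβ : (0:ℝ) < p * β := mul_pos hp hβ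
  have hr1 : 0 < r₁ := div_pos hf₂ hpβ
  have har1 : 0 < α * r₁ := mul_pos hα0 hr1
  have h3 : 0 < α * r₁ + r₃ :=
    add_pos har1 (div_pos (sub_pos.mpr h23) hp)
  have h4 : 0 < α * r₁ + r₄ :=
    add_pos har1 (div_pos (sub_pos.mpr h24) hp)
  have e3 : x₃ = b / c * (α * r₁ + r₃) := by
    simp only [x₃, r₁, r₃]
    field_simp
    ring
  have e4 : x₄ = b / c * (α * r₁ + r₄) := by
    simp only [x₄, r₁, r₄]
    field_simp
    ring
  have k3 : x₃ * (α * r₁) / (α * r₁ + r₃) = b / c * (α * r₁) := by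
    rw [e3]; field_simp
  have k4 : x₄ * (α * r₁) / (α * r₁ + r₄) = b / c * (α * r₁) := by
    rw [e4]; field_simp
  refine ⟨by simp [x₁], ?_, ?_, ?_, ?_, by simp [r₂], ?_, ?_⟩
  · show f₂ * x₂ - p * x₂ * (β * r₁ + r₂) = 0
    simp only [x₂, r₁, r₂]
    field_simp
    ring
  · show f₃ * x₃ - p * x₃ * (β * r₁ + r₃) = 0
    simp only [x₃, r₁, r₃]
    field_simp
    ring
  · show f₄ * x₄ - p * x₄ * (β * r₁ + r₄) = 0
    simp only [x₄, r₁, r₄]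
    field_simp
    ring
  · show c * (x₁ + x₂ * (α * r₁) / (α * r₁ + r₂) + x₃ * (α * r₁) / (α * r₁ + r₃) +
        x₄ * (α * r₁) / (α * r₁ + r₄)) - b * r₁ = 0
    rw [k3, k4]
    show c * (x₁ + x₂ * (α * r₁) / (α * r₁ + 0) + b / c * (α * r₁) + b / c * (α * r₁)) - b * r₁ = 0
    rw [add_zero, mul_div_assoc, div_self har1.ne', mul_one]
    simp only [x₁, x₂, r₁]
    field_simp
    ring
  · show c * x₃ * r₃ / (α * r₁ + r₃) - b * r₃ = 0
    rw [e3, sub_eq_zero, div_eq_iff h3.ne']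
    field_simp
  · show c * x₄ * r₄ / (α * r₁ + r₄) - b * r₄ = 0
    rw [e4, sub_eq_zero, div_eq_iff h4.ne']
    field_simp
end

section
/- Let b, c, p > 0, 0 < β < α < 1, f₁, …, f₅ > 0 with f₁ > f₃ + f₅. Set r₁ = (f₁−f₃−f₅)/p, x₁ = (b/(cp))(f₁−f₃−f₅+(α/β)f₃+(α/β)f₅), r₂ = f₃/(pβ), x₃ = b f₃(1−α)/(cpβ), r₄ = f₅/(pβ), x₅ = b f₅(1−α)/(cpβ). Then all the coefficients of the degree-6 polynomial T(λ) = λ⁶ + [ (b²r₁/(cx₁))(1−α) + b(2−α) ] λ⁵ + b{ f₁ + (1−α)[(b²r₁/(cx₁))(2−α) + b] } λ⁴ + b²(1−α){ 2f₁−f₃−f₅ + (b/(cx₁))[r₁(b(1−α)+f₃+f₅) + 2α²f₃r₄] } λ³ + b²(1−α){ (b²r₁/(cx₁))(1−α)(f₃+f₅) + p r₁(f₃+f₅+b(1−α)) + f₃f₅(1+α) } λ² + b³(1−α)²[ (b r₁/(cx₁)) f₃f₅ + p r₁(f₃+f₅) ] λ + p b³ r₁ f₃ f₅ (1−α)² are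 strictly positive; hence T(λ) > 0 for all λ ≥ 0. -/
theorem stmt_14 (b c p α β f₁ f₂ f₃ f₄ f₅ : ℝ)
    (hb : 0 < b) (hc : 0 < c) (hp : 0 < p)
    (hβ : 0 < β) (hβα : β < α) (hα1 : α < 1)
    (hf₁ : 0 < f₁) (hf₂ : 0 < f₂) (hf₃ : 0 < f₃) (hf₄ : 0 < f₄) (hf₅ : 0 < f₅)
    (h135 : f₃ + f₅ < f₁) :
    let r₁ : ℝ := (f₁ - f₃ - f₅) / p
    let x₁ : ℝ := b / (c * p) * (f₁ - f₃ - f₅ + (α / β) * f₃ + (α / β) * f₅)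
    let r₂ : ℝ := f₃ / (p * β)
    let x₃ : ℝ := b * f₃ * (1 - α) / (c * p * β)
    let r₄ : ℝ := f₅ / (p * β)
    let x₅ : ℝ := b * f₅ * (1 - α) / (c * p * β)
    let a₅ : ℝ := b ^ 2 * r₁ / (c * x₁) * (1 - α) + b * (2 - α)
    let a₄ : ℝ := b * (f₁ + (1 - α) * (b ^ 2 * r₁ / (c * x₁) * (2 - α) + b))
    let a₃ : ℝ := b ^ 2 * (1 - α) * (2 * f₁ - f₃ - f₅ +
      b / (c * x₁) * (r₁ * (b * (1 - α) + f₃ + f₅) + 2 * α ^ 2 * f₃ * r₄))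
    let a₂ : ℝ := b ^ 2 * (1 - α) * (b ^ 2 * r₁ / (c * x₁) * (1 - α) * (f₃ + f₅) +
      p * r₁ * (f₃ + f₅ + b * (1 - α)) + f₃ * f₅ * (1 + α))
    let a₁ : ℝ := b ^ 3 * (1 - α) ^ 2 * (b * r₁ / (c * x₁) * f₃ * f₅ + p * r₁ * (f₃ + f₅))
    let a₀ : ℝ := p * b ^ 3 * r₁ * f₃ * f₅ * (1 - α) ^ 2
    let T : ℝ → ℝ := fun l => l ^ 6 + a₅ * l ^ 5 + a₄ * l ^ 4 + a₃ * l ^ 3 +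
      a₂ * l ^ 2 + a₁ * l + a₀
    (0 < a₅ ∧ 0 < a₄ ∧ 0 < a₃ ∧ 0 < a₂ ∧ 0 < a₁ ∧ 0 < a₀) ∧
    ∀ l : ℝ, 0 ≤ l → 0 < T l := by
  intro r₁ x₁ r₂ x₃ r₄ x₅ a₅ a₄ a₃ a₂ a₁ a₀ T
  have hα : 0 < α := lt_trans hβ hβα
  have h1α : 0 < 1 - α := by linarith
  have h2α : 0 < 2 - α := by linarith
  have hr₁ : 0 < r₁ := div_pos (by linarith) hp
  have hx₁ : 0 < x₁ := by
    have h3 := mul_pos (div_pos hα hβ) hf₃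
    have h5 := mul_pos (div_pos hα hβ) hf₅
    exact mul_pos (div_pos hb (mul_pos hc hp)) (by linarith)
  have hr₄ : 0 < r₄ := div_pos hf₅ (mul_pos hp hβ)
  have hcx : 0 < c * x₁ := mul_pos hc hx₁
  have hA : 0 < b ^ 2 * r₁ / (c * x₁) := div_pos (mul_pos (pow_pos hb 2) hr₁) hcx
  have hB : 0 < b / (c * x₁) := div_pos hb hcx
  have hC : 0 < b * r₁ / (c * x₁) := div_pos (mul_pos hb hr₁) hcx
  have ha₅ : 0 < a₅ := add_pos (mul_pos hA h1α) (mul_pos hb h2α)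
  have ha₄ : 0 < a₄ :=
    mul_pos hb (add_pos hf₁ (mul_pos h1α (add_pos (mul_pos hA h2α) hb)))
  have ha₃ : 0 < a₃ := by
    refine mul_pos (mul_pos (pow_pos hb 2) h1α) (add_pos (by linarith) (mul_pos hB ?_))
    have h1 : 0 < r₁ * (b * (1 - α) + f₃ + f₅) :=
      mul_pos hr₁ (by nlinarith [mul_pos hb h1α])
    have h2 : 0 < 2 * α ^ 2 * f₃ * r₄ := by positivity
    linarith
  have ha₂ : 0 < a₂ := by
    refine mul_pos (mul_pos (pow_pos hb 2) h1α) ?_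
    have h1 : 0 < b ^ 2 * r₁ / (c * x₁) * (1 - α) * (f₃ + f₅) :=
      mul_pos (mul_pos hA h1α) (by linarith)
    have h2 : 0 < p * r₁ * (f₃ + f₅ + b * (1 - α)) :=
      mul_pos (mul_pos hp hr₁) (by nlinarith [mul_pos hb h1α])
    have h3 : 0 < f₃ * f₅ * (1 + α) := by positivity
    linarith
  have ha₁ : 0 < a₁ := by
    refine mul_pos (mul_pos (pow_pos hb 3) (pow_pos h1α 2)) ?_
    have h1 : 0 < b * r₁ / (c * x₁) * f₃ * f₅ := mul_pos (mul_pos hC hf₃) hf₅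
    have h2 : 0 < p * r₁ * (f₃ + f₅) := mul_pos (mul_pos hp hr₁) (by linarith)
    linarith
  have ha₀ : 0 < a₀ := by
    have := pow_pos h1α 2
    have := pow_pos hb 3
    exact mul_pos (mul_pos (mul_pos (mul_pos (mul_pos hp (pow_pos hb 3)) hr₁) hf₃) hf₅)
      (pow_pos h1α 2)
  refine ⟨⟨ha₅, ha₄, ha₃, ha₂, ha₁, ha₀⟩, ?_⟩
  intro l hl
  have h6 : (0:ℝ) ≤ l ^ 6 := by positivity
  have t5 := mul_nonneg ha₅.le (pow_nonneg hl 5)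
  have t4 := mul_nonneg ha₄.le (pow_nonneg hl 4)
  have t3 := mul_nonneg ha₃.le (pow_nonneg hl 3)
  have t2 := mul_nonneg ha₂.le (pow_nonneg hl 2)
  have t1 := mul_nonneg ha₁.le hl
  show 0 < l ^ 6 + a₅ * l ^ 5 + a₄ * l ^ 4 + a₃ * l ^ 3 + a₂ * l ^ 2 + a₁ * l + a₀
  linarith
end

section
/- Let b, c, p > 0, 0 < β < α < 1, f₁,…,f₅ > 0 with f₁ > f₃ + f₅. Then the point x₁ = (b/(cp))(f₁−f₃−f₅+(α/β)(f₃+f₅)), r₁ = (f₁−f₃−f₅)/p, x₂ = 0, r₂ = f₃/(pβ), x₃ = b f₃(1−α)/(cpβ), r₃ = 0, x₄ = 0, r₄ = f₅/(pβ), x₅ = b f₅(1−α)/(cpβ), r₅ = 0 is an equilibrium of the five-node system: ẋ₁ = f₁x₁ − px₁(r₁+βr₂+βr₄), ẋ₂ = f₂x₂ − px₂(r₂+βr₃), ẋ₃ = f₃x₃ − px₃(βr₂+r₃), ẋ₄ = f₄x₄ − px₄(r₄+βr₅), ẋ₅ = f₅x₅ − px₅(βr₄+r₅), ṙ₁ =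 cx₁ r₁/(r₁+αr₂+αr₄) − br₁, ṙ₂ = c(x₁ αr₂/(r₁+αr₂+αr₄) + x₂ r₂/(r₂+αr₃) + x₃ αr₂/(αr₂+r₃)) − br₂, ṙ₃ = c(x₂ αr₃/(r₂+αr₃) + x₃ r₃/(αr₂+r₃)) − br₃, ṙ₄ = c(x₁ αr₄/(r₁+αr₂+αr₄) + x₄ r₄/(r₄+αr₅) + x₅ αr₄/(αr₄+r₅)) − br₄, ṙ₅ = c(x₄ αr₅/(r₄+αr₅) + x₅ r₅/(αr₄+r₅)) − br₅. -/
set_option maxHeartbeats 1600000 in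
theorem stmt_15 (b c p α β f₁ f₂ f₃ f₄ f₅ : ℝ)
    (hb : 0 < b) (hc : 0 < c) (hp : 0 < p)
    (hβ : 0 < β) (hβα : β < α) (hα1 : α < 1)
    (hf₁ : 0 < f₁) (hf₂ : 0 < f₂) (hf₃ : 0 < f₃) (hf₄ : 0 < f₄) (hf₅ : 0 < f₅)
    (h135 : f₃ + f₅ < f₁) :
    let x₁ : ℝ := b / (c * p) * (f₁ - f₃ - f₅ + (α / β) * (f₃ + f₅))
    let r₁ : ℝ := (f₁ - f₃ - f₅) / p
    let x₂ : ℝ := 0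
    let r₂ : ℝ := f₃ / (p * β)
    let x₃ : ℝ := b * f₃ * (1 - α) / (c * p * β)
    let r₃ : ℝ := 0
    let x₄ : ℝ := 0
    let r₄ : ℝ := f₅ / (p * β)
    let x₅ : ℝ := b * f₅ * (1 - α) / (c * p * β)
    let r₅ : ℝ := 0
    (f₁ * x₁ - p * x₁ * (r₁ + β * r₂ + β * r₄) = 0) ∧
    (f₂ * x₂ - p * x₂ * (r₂ + β * r₃) = 0) ∧
    (f₃ * x₃ - p * x₃ * (β * r₂ + r₃) = 0) ∧
    (f₄ * x₄ - p * x₄ * (r₄ + β * r₅) = 0) ∧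
    (f₅ * x₅ - p * x₅ * (β * r₄ + r₅) = 0) ∧
    (c * x₁ * r₁ / (r₁ + α * r₂ + α * r₄) - b * r₁ = 0) ∧
    (c * (x₁ * (α * r₂) / (r₁ + α * r₂ + α * r₄) + x₂ * r₂ / (r₂ + α * r₃) +
        x₃ * (α * r₂) / (α * r₂ + r₃)) - b * r₂ = 0) ∧
    (c * (x₂ * (α * r₃) / (r₂ + α * r₃) + x₃ * r₃ / (α * r₂ + r₃)) - b * r₃ = 0) ∧
    (c * (x₁ * (α * r₄) / (r₁ + α * r₂ + α * r₄) + x₄ * r₄ / (r₄ + α * r₅) +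
        x₅ * (α * r₄) / (α * r₄ + r₅)) - b * r₄ = 0) ∧
    (c * (x₄ * (α * r₅) / (r₄ + α * r₅) + x₅ * r₅ / (α * r₄ + r₅)) - b * r₅ = 0) := by
  intro x₁ r₁ x₂ r₂ x₃ r₃ x₄ r₄ x₅ r₅
  have hα : 0 < α := hβ.trans hβα
  have hd : r₁ + α * r₂ + α * r₄ = ((f₁ - f₃ - f₅) * β + α * (f₃ + f₅)) / (p * β) := by
    simp only [r₁, r₂, r₄]
    field_simp
    ring
  have hnum : 0 < (f₁ - f₃ - f₅) * β + α * (f₃ + f₅) := by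
    have h1 := mul_pos (by linarith : (0:ℝ) < f₁ - f₃ - f₅) hβ
    have h2 := mul_pos hα (by linarith : (0:ℝ) < f₃ + f₅)
    linarith
  have hdpos : 0 < r₁ + α * r₂ + α * r₄ := by rw [hd]; positivity
  have hdne : r₁ + α * r₂ + α * r₄ ≠ 0 := hdpos.ne'
  have hr₂ : r₂ = f₃ / (p * β) := rfl
  have hr₄ : r₄ = f₅ / (p * β) := rfl
  have hr₃ : r₃ = 0 := rfl
  have hr₅ : r₅ = 0 := rfl
  have h23 : r₂ + α * r₃ ≠ 0 := by rw [hr₂, hr₃]; positivity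
  have h32 : α * r₂ + r₃ ≠ 0 := by rw [hr₂, hr₃]; positivity
  have h45 : r₄ + α * r₅ ≠ 0 := by rw [hr₄, hr₅]; positivity
  have h54 : α * r₄ + r₅ ≠ 0 := by rw [hr₄, hr₅]; positivity
  refine ⟨?_, by simp [x₂], ?_, by simp [x₄], ?_, ?_, ?_, ?_, ?_, ?_⟩
  · simp only [x₁, r₁, r₂, r₄]
    field_simp
    ring
  · simp only [x₃, r₂, r₃]
    field_simp
    ring
  · simp only [x₅, r₄, r₅]
    field_simp
    ring
  · rw [hd]
    simp only [x₁, r₁]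
    field_simp
    ring
  · rw [hd]
    simp only [x₁, x₂, x₃, hr₂, hr₃]
    field_simp
    ring
  · simp only [hr₃, x₂, mul_zero, zero_mul, zero_div, add_zero, zero_add, sub_zero]
  · rw [hd]
    simp only [x₁, x₄, x₅, hr₄, hr₅]
    field_simp
    ring
  · simp only [hr₅, x₄, mul_zero, zero_mul, zero_div, add_zero, zero_add, sub_zero]
end
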